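/- arXiv:2210.08268 — 6 statements merged into one kernel-verified Lean document; each statement's English description precedes it below -/
import Mathlib

section
/- Let N ≥ 1, let σ be a permutation of {1,…,N}, let r : {1,…,N} → [0,∞), λ : {1,…,N} → [0,1], and let q, s ∈ [0,1). Then Σ_{v=1}^{∞} Σ_{b=1}^{∞} q^{v−1}(1−q) s^{b−1}(1−s) · [ Σ_{Q ⊆ {1,…,min(v,N)}} P^buy(Q; min(v,N), b, λ, σ) · (Σ_{i∈Q} r_{σ_i}) ] = Σ_{k=1}^{N} r_{σ_k} λ_{σ_k} q^{k−1} Σ_{u=0}^{k−1} s^u H_σ(k,u;λ), where the left-hand side is an absolutely convergent double series. -/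
/-!
By linearity the revenue is `∑ k, r_{σ_k} · P(position k is bought)`. Position `k` is bought
exactly when it is examined, its product is chosen (probability `λ_{σ_k}`), and fewer than `b`
of the positions before it were chosen, which has probability `∑_{u<b} H_σ(k,u;λ)`; what happens
after `k` does not matter, because `P^buy` on the later positions sums to `1` for every budget.
Averaging over the geometric span and budget turns `P(v ≥ k)` into `q^(k-1)` and `P(b > u)` into
`s^u`. The summand is thus a finite linear combination of products of two nonnegative summable
geometric tails, so the double series converges absolutely.
-/
open Finset

/-- `Hfun σ lam k u = H_σ(k,u;λ)`: the probability that exactly `u` of the first `k-1`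
displayed products are purchased (ignoring attention span and budget). -/
noncomputable def Hfun (σ : ℕ → ℕ) (lam : ℕ → ℝ) (k u : ℕ) : ℝ :=
  ∑ Q ∈ (Finset.Icc 1 (k - 1)).powersetCard u,
    (∏ i ∈ Q, lam (σ i)) * ∏ i ∈ Finset.Icc 1 (k - 1) \ Q, (1 - lam (σ i))

/-- `Pbuy σ lam v b Q = P^buy(Q; v, b, λ, σ)`: the probability that a consumer with
attention span `v` and purchase budget `b` purchases exactly the positions `Q ⊆ {1,…,v}`. -/
noncomputable def Pbuy (σ : ℕ → ℕ) (lam : ℕ → ℝ) (v b : ℕ) (Q : Finset ℕ) : ℝ :=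
  if Q.card < b then
    (∏ k ∈ Q, lam (σ k)) * ∏ k ∈ Finset.Icc 1 v \ Q, (1 - lam (σ k))
  else if Q.card = b then
    (∏ k ∈ Q, lam (σ k)) *
      ∏ k ∈ (Finset.Icc 1 v \ Q).filter (fun k => k ≤ Q.sup id), (1 - lam (σ k))
  else 0

noncomputable def bernoulliWeight (p : ℕ → ℝ) (s Q : Finset ℕ) : ℝ :=
  (∏ k ∈ Q, p k) * ∏ k ∈ s \ Q, (1 - p k)

noncomputable def purchaseWeight (p : ℕ → ℝ) (s : Finset ℕ) (c : ℕ) (Q : Finset ℕ) : ℝ :=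
  if Q.card < c then bernoulliWeight p s Q
  else if Q.card = c then
    (∏ k ∈ Q, p k) * ∏ k ∈ (s \ Q).filter (fun k => k ≤ Q.sup id), (1 - p k)
  else 0

theorem Pbuy_eq_purchaseWeight (σ : ℕ → ℕ) (lam : ℕ → ℝ) (v b : ℕ) :
    Pbuy σ lam v b = purchaseWeight (fun k => lam (σ k)) (Icc 1 v) b := rfl

section Weights

variable (p : ℕ → ℝ) {a c : ℕ} {s Q : Finset ℕ}

theorem bernoulliWeight_insert_of_notMem (ha : a ∉ s) (haQ : a ∉ Q) :
    bernoulliWeight p (insert a s) Q = (1 - p a) * bernoulliWeight p s Q := by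
  rw [bernoulliWeight, bernoulliWeight, insert_sdiff_of_notMem _ haQ,
    prod_insert fun h => ha (mem_sdiff.1 h).1]
  ring

theorem bernoulliWeight_insert_insert (ha : a ∉ s) (haQ : a ∉ Q) :
    bernoulliWeight p (insert a s) (insert a Q) = p a * bernoulliWeight p s Q := by
  rw [bernoulliWeight, bernoulliWeight, insert_sdiff_insert, sdiff_insert_of_notMem ha,
    prod_insert haQ]
  ring

theorem purchaseWeight_of_lt_card (h : c < Q.card) : purchaseWeight p s c Q = 0 := by
  rw [purchaseWeight, if_neg (by omega), if_neg (by omega)]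

theorem purchaseWeight_insert_of_notMem (ha : ∀ x ∈ s, a < x) (hQ : Q ⊆ s) :
    purchaseWeight p (insert a s) (c + 1) Q = (1 - p a) * purchaseWeight p s (c + 1) Q := by
  have has : a ∉ s := fun h => lt_irrefl a (ha a h)
  have haQ : a ∉ Q := fun h => has (hQ h)
  rcases lt_trichotomy Q.card (c + 1) with h | h | h
  · simp only [purchaseWeight, if_pos h, bernoulliWeight_insert_of_notMem p has haQ]
  · obtain ⟨x, hx⟩ := card_pos.1 (by omega : 0 < Q.card)
    have haSup : a ≤ Q.sup id := (ha x (hQ hx)).le.trans (le_sup (f := id) hx)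
    rw [purchaseWeight, purchaseWeight, if_neg h.not_lt, if_pos h, if_neg h.not_lt, if_pos h,
      insert_sdiff_of_notMem _ haQ, filter_insert, if_pos haSup,
      prod_insert fun h => has (mem_sdiff.1 (mem_filter.1 h).1).1]
    ring
  · rw [purchaseWeight_of_lt_card p h, purchaseWeight_of_lt_card p h, mul_zero]

theorem purchaseWeight_insert_insert (ha : ∀ x ∈ s, a < x) (hQ : Q ⊆ s) :
    purchaseWeight p (insert a s) (c + 1) (insert a Q) = p a * purchaseWeight p s c Q := by
  have has : a ∉ s := fun h => lt_irrefl a (ha a h)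
  have haQ : a ∉ Q := fun h => has (hQ h)
  have hcard : (insert a Q).card = Q.card + 1 := card_insert_of_notMem haQ
  rcases lt_trichotomy Q.card c with h | h | h
  · simp only [purchaseWeight, hcard, add_lt_add_iff_right, if_pos h,
      bernoulliWeight_insert_insert p has haQ]
  · have hfilter : (s \ Q).filter (fun k => k ≤ (insert a Q).sup id)
        = (s \ Q).filter (fun k => k ≤ Q.sup id) := by
      refine filter_congr fun x hx => ?_
      have hax := ha x (mem_sdiff.1 hx).1
      simp only [sup_insert, id, le_sup_iff]
      omega
    rw [purchaseWeight, purchaseWeight, hcard, if_neg (by omega), if_pos (by omega),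
      if_neg (by omega), if_pos h, insert_sdiff_insert, sdiff_insert_of_notMem has, hfilter,
      prod_insert haQ]
    ring
  · rw [purchaseWeight_of_lt_card p (by omega), purchaseWeight_of_lt_card p h, mul_zero]

-- `(∅ : Finset ℕ).sup id = 0`, so with budget `0` the empty purchase is charged the
-- non-purchase factor of a position `0`; hence `0 ∉ s`.
theorem sum_purchaseWeight_zero (h0 : 0 ∉ s) : ∑ Q ∈ s.powerset, purchaseWeight p s 0 Q = 1 := by
  rw [sum_eq_single_of_mem ∅ (empty_mem_powerset s) fun Q _ hQ =>
    purchaseWeight_of_lt_card p (card_pos.2 (nonempty_iff_ne_empty.2 hQ))]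
  rw [purchaseWeight, card_empty, if_neg (lt_irrefl 0), if_pos rfl, prod_empty, one_mul,
    sdiff_empty, sup_empty, Nat.bot_eq_zero,
    filter_false_of_mem fun k hk hk0 => h0 (Nat.le_zero.1 hk0 ▸ hk), prod_empty]

theorem sum_purchaseWeight (h0 : 0 ∉ s) (c : ℕ) :
    ∑ Q ∈ s.powerset, purchaseWeight p s c Q = 1 := by
  induction s using Finset.induction_on_min generalizing c with
  | empty => cases c <;> simp [purchaseWeight, bernoulliWeight]
  | insert a s ha ih =>
    have h0s : 0 ∉ s := fun h => h0 (mem_insert_of_mem h)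
    cases c with
    | zero => exact sum_purchaseWeight_zero p h0
    | succ c =>
      rw [sum_powerset_insert fun h => lt_irrefl a (ha a h),
        sum_congr rfl fun Q hQ => purchaseWeight_insert_of_notMem p ha (mem_powerset.1 hQ),
        sum_congr rfl fun Q hQ => purchaseWeight_insert_insert p ha (mem_powerset.1 hQ),
        ← mul_sum, ← mul_sum, ih h0s, ih h0s]
      ring

theorem sum_bernoulliWeight_insert (ha : a ∉ s) :
    ∑ P ∈ (insert a s).powerset with P.card < c + 1, bernoulliWeight p (insert a s) P =
      (1 - p a) * ∑ P ∈ s.powerset with P.card < c + 1, bernoulliWeight p s P +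
        p a * ∑ P ∈ s.powerset with P.card < c, bernoulliWeight p s P := by
  simp only [sum_filter]
  rw [sum_powerset_insert ha, mul_sum, mul_sum]
  congr 1 <;> refine sum_congr rfl fun P hP => ?_
  · rw [bernoulliWeight_insert_of_notMem p ha fun h => ha (mem_powerset.1 hP h)]
    split_ifs <;> ring
  · have haP : a ∉ P := fun h => ha (mem_powerset.1 hP h)
    rw [card_insert_of_notMem haP, bernoulliWeight_insert_insert p ha haP]
    simp only [add_lt_add_iff_right]
    split_ifs <;> ring

theorem sum_filter_mem_purchaseWeight_zero (k : ℕ) :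
    ∑ Q ∈ s.powerset with k ∈ Q, purchaseWeight p s 0 Q = 0 :=
  sum_eq_zero fun _ hQ => purchaseWeight_of_lt_card p (card_pos.2 ⟨k, (mem_filter.1 hQ).2⟩)

theorem sum_filter_mem_purchaseWeight_insert {k : ℕ} (ha : ∀ x ∈ s, a < x) (hak : a ≠ k) :
    ∑ Q ∈ (insert a s).powerset with k ∈ Q, purchaseWeight p (insert a s) (c + 1) Q =
      (1 - p a) * ∑ Q ∈ s.powerset with k ∈ Q, purchaseWeight p s (c + 1) Q +
        p a * ∑ Q ∈ s.powerset with k ∈ Q, purchaseWeight p s c Q := by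
  simp only [sum_filter]
  rw [sum_powerset_insert fun h => lt_irrefl a (ha a h), mul_sum, mul_sum]
  congr 1 <;> refine sum_congr rfl fun Q hQ => ?_
  · rw [purchaseWeight_insert_of_notMem p ha (mem_powerset.1 hQ), mul_ite, mul_zero]
  · simp only [mem_insert, hak.symm, false_or]
    rw [purchaseWeight_insert_insert p ha (mem_powerset.1 hQ), mul_ite, mul_zero]

theorem sum_filter_mem_purchaseWeight {k : ℕ} {B : Finset ℕ} (hB : ∀ b ∈ B, k < b)
    {A : Finset ℕ} (hA : ∀ a ∈ A, a < k) (c : ℕ) :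
    ∑ Q ∈ (A ∪ insert k B).powerset with k ∈ Q, purchaseWeight p (A ∪ insert k B) c Q =
      p k * ∑ P ∈ A.powerset with P.card < c, bernoulliWeight p A P := by
  cases c with
  | zero =>
    rw [sum_filter_mem_purchaseWeight_zero,
      filter_false_of_mem fun P _ => Nat.not_lt_zero _, sum_empty, mul_zero]
  | succ c =>
    induction A using Finset.induction_on_min generalizing c with
    | empty =>
      have hkB : k ∉ B := fun h => lt_irrefl k (hB k h)
      rw [empty_union, sum_filter, sum_powerset_insert hkB,
        sum_eq_zero fun Q hQ => if_neg fun h => hkB (mem_powerset.1 hQ h), zero_add,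
        sum_congr rfl fun Q hQ => by
          rw [if_pos (mem_insert_self k Q),
            purchaseWeight_insert_insert p hB (mem_powerset.1 hQ)],
        ← mul_sum, sum_purchaseWeight p (fun h => (hB 0 h).not_ge (Nat.zero_le k))]
      simp [bernoulliWeight, filter_singleton]
    | insert a A ha ih =>
      have hak : a < k := hA a (mem_insert_self a A)
      have hlt : ∀ x ∈ A ∪ insert k B, a < x := by
        simp only [mem_union, mem_insert]
        rintro x (hx | rfl | hx)
        exacts [ha x hx, hak, hak.trans (hB x hx)]
      have ih' := ih fun x hx => hA x (mem_insert_of_mem hx)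
      rw [insert_union, sum_filter_mem_purchaseWeight_insert p hlt hak.ne,
        sum_bernoulliWeight_insert p fun h => lt_irrefl a (ha a h), ih' c]
      cases c with
      | zero =>
        rw [sum_filter_mem_purchaseWeight_zero,
          filter_false_of_mem fun P _ => Nat.not_lt_zero _, sum_empty]
        ring
      | succ c =>
        rw [ih' c]
        ring

end Weights

theorem sum_powerset_mul_sum {α R : Type*} [DecidableEq α] [CommSemiring R] (s : Finset α)
    (f : Finset α → R) (g : α → R) :
    ∑ Q ∈ s.powerset, f Q * ∑ i ∈ Q, g i = ∑ i ∈ s, g i * ∑ Q ∈ s.powerset with i ∈ Q, f Q := by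
  simp_rw [mul_sum]
  rw [sum_comm' (t' := s) (s' := fun i => {Q ∈ s.powerset | i ∈ Q})]
  · exact sum_congr rfl fun i _ => sum_congr rfl fun Q _ => mul_comm _ _
  · intro Q i
    simp only [mem_powerset, mem_filter]
    exact ⟨fun ⟨hQ, hi⟩ => ⟨⟨hQ, hi⟩, hQ hi⟩, fun ⟨⟨hQ, hi⟩, _⟩ => ⟨hQ, hi⟩⟩

theorem sum_powerset_filter_card_lt {α R : Type*} [AddCommMonoid R] (s : Finset α)
    (f : Finset α → R) (c : ℕ) :
    ∑ P ∈ s.powerset with P.card < c, f P =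
      ∑ u ∈ range (s.card + 1) with u < c, ∑ P ∈ s.powersetCard u, f P := by
  rw [sum_filter, sum_powerset, sum_filter]
  refine sum_congr rfl fun u _ => ?_
  rw [sum_congr rfl fun P hP => by rw [(mem_powersetCard.1 hP).2], sum_ite_irrel, sum_const_zero]

theorem sum_bernoulliWeight_filter_card_lt (σ : ℕ → ℕ) (lam : ℕ → ℝ) {k : ℕ} (hk : 1 ≤ k)
    (c : ℕ) :
    ∑ P ∈ (Icc 1 (k - 1)).powerset with P.card < c,
        bernoulliWeight (fun i => lam (σ i)) (Icc 1 (k - 1)) P =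
      ∑ u ∈ range k with u < c, Hfun σ lam k u := by
  rw [sum_powerset_filter_card_lt, Nat.card_Icc, Nat.add_sub_cancel, Nat.sub_add_cancel hk]
  rfl

theorem sum_Pbuy_mul_sum (σ : ℕ → ℕ) (lam r : ℕ → ℝ) (v b : ℕ) :
    ∑ Q ∈ (Icc 1 v).powerset, Pbuy σ lam v b Q * ∑ i ∈ Q, r (σ i) =
      ∑ k ∈ Icc 1 v, r (σ k) * (lam (σ k) * ∑ u ∈ range k with u < b, Hfun σ lam k u) := by
  rw [sum_powerset_mul_sum]
  refine sum_congr rfl fun k hk => ?_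
  obtain ⟨hk1, hkv⟩ := mem_Icc.1 hk
  have hsplit : Icc 1 v = Icc 1 (k - 1) ∪ insert k (Icc (k + 1) v) := by
    ext i
    simp only [mem_union, mem_insert, mem_Icc]
    omega
  rw [Pbuy_eq_purchaseWeight, hsplit,
    sum_filter_mem_purchaseWeight _ (fun i hi => by rw [mem_Icc] at hi; omega)
      (fun i hi => by rw [mem_Icc] at hi; omega),
    sum_bernoulliWeight_filter_card_lt σ lam hk1]

noncomputable def geomTail (x : ℝ) (m n : ℕ) : ℝ :=
  if m ≤ n then x ^ n * (1 - x) else 0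

section Geometric

variable {x : ℝ}

theorem geomTail_nonneg (h0 : 0 ≤ x) (h1 : x ≤ 1) (m n : ℕ) : 0 ≤ geomTail x m n := by
  unfold geomTail
  split_ifs
  exacts [mul_nonneg (pow_nonneg h0 n) (sub_nonneg.2 h1), le_rfl]

theorem hasSum_geomTail (h0 : 0 ≤ x) (h1 : x < 1) (m : ℕ) : HasSum (geomTail x m) (x ^ m) := by
  have hshift : HasSum (fun n => geomTail x m (n + m)) (x ^ m) := by
    have h := ((hasSum_geometric_of_lt_one h0 h1).mul_right (1 - x)).mul_left (x ^ m)
    rw [inv_mul_cancel₀ (sub_ne_zero.2 h1.ne'), mul_one] at h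
    have heq : (fun n => geomTail x m (n + m)) = fun n => x ^ m * (x ^ n * (1 - x)) := by
      funext n
      rw [geomTail, if_pos (Nat.le_add_left m n), pow_add]
      ring
    rwa [heq]
  have hhead : ∑ i ∈ range m, geomTail x m i = 0 :=
    sum_eq_zero fun i hi => if_neg (by simpa using hi)
  simpa [hhead] using (hasSum_nat_add_iff m).1 hshift

theorem hasSum_geomTail_mul_geomTail {y : ℝ} (hx : x ∈ Set.Ico (0 : ℝ) 1)
    (hy : y ∈ Set.Ico (0 : ℝ) 1) (m n : ℕ) :
    HasSum (fun p : ℕ × ℕ => geomTail x m p.1 * geomTail y n p.2) (x ^ m * y ^ n) :=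
  (hasSum_geomTail hx.1 hx.2 m).mul (hasSum_geomTail hy.1 hy.2 n) <|
    (hasSum_geomTail hx.1 hx.2 m).summable.mul_of_nonneg (hasSum_geomTail hy.1 hy.2 n).summable
      (geomTail_nonneg hx.1 hx.2.le m) (geomTail_nonneg hy.1 hy.2.le n)

end Geometric

theorem revenue_term_eq_sum_geomTail (N : ℕ) (σ : ℕ → ℕ) (r lam : ℕ → ℝ) (q s : ℝ) (v b : ℕ) :
    q ^ v * (1 - q) * (s ^ b * (1 - s)) *
        ∑ Q ∈ (Icc 1 (min (v + 1) N)).powerset,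
          Pbuy σ lam (min (v + 1) N) (b + 1) Q * ∑ i ∈ Q, r (σ i) =
      ∑ k ∈ Icc 1 N, ∑ u ∈ range k,
        r (σ k) * lam (σ k) * Hfun σ lam k u * (geomTail q (k - 1) v * geomTail s u b) := by
  have hIcc : Icc 1 (min (v + 1) N) = {k ∈ Icc 1 N | k ≤ v + 1} := by
    ext k
    simp only [mem_filter, mem_Icc]
    omega
  rw [sum_Pbuy_mul_sum, hIcc, sum_filter, mul_sum]
  refine sum_congr rfl fun k _ => ?_
  by_cases hkv : k ≤ v + 1
  · rw [if_pos hkv, sum_filter, mul_sum, mul_sum, mul_sum]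
    refine sum_congr rfl fun u _ => ?_
    simp only [geomTail, if_pos (show k - 1 ≤ v by omega), Nat.lt_succ_iff]
    split_ifs <;> ring
  · rw [if_neg hkv, mul_zero]
    refine (sum_eq_zero fun u _ => ?_).symm
    rw [geomTail, if_neg (by omega), zero_mul, mul_zero]

theorem HasSum.summable_and_tsum_tsum_eq {α β : Type*} {f : α × β → ℝ} {a : ℝ}
    (h : HasSum f a) : Summable f ∧ ∑' x, ∑' y, f (x, y) = a :=
  ⟨h.summable, (h.summable.tsum_prod' h.summable.prod_factor).symm.trans h.tsum_eq⟩

theorem stmt1_general (N : ℕ) (σ : ℕ → ℕ)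
    (r lam : ℕ → ℝ)
    (q s : ℝ) (hq : q ∈ Set.Ico (0 : ℝ) 1) (hs : s ∈ Set.Ico (0 : ℝ) 1) :
    Summable (fun p : ℕ × ℕ =>
      q ^ p.1 * (1 - q) * (s ^ p.2 * (1 - s)) *
        ∑ Q ∈ (Finset.Icc 1 (min (p.1 + 1) N)).powerset,
          Pbuy σ lam (min (p.1 + 1) N) (p.2 + 1) Q * ∑ i ∈ Q, r (σ i)) ∧
    (∑' v : ℕ, ∑' b : ℕ,
        q ^ v * (1 - q) * (s ^ b * (1 - s)) *
          ∑ Q ∈ (Finset.Icc 1 (min (v + 1) N)).powerset,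
            Pbuy σ lam (min (v + 1) N) (b + 1) Q * ∑ i ∈ Q, r (σ i)) =
      ∑ k ∈ Finset.Icc 1 N, r (σ k) * lam (σ k) * q ^ (k - 1) *
        ∑ u ∈ Finset.range k, s ^ u * Hfun σ lam k u := by
  refine HasSum.summable_and_tsum_tsum_eq ?_
  have hrhs : ∑ k ∈ Icc 1 N, r (σ k) * lam (σ k) * q ^ (k - 1) *
        ∑ u ∈ range k, s ^ u * Hfun σ lam k u =
      ∑ k ∈ Icc 1 N, ∑ u ∈ range k,
        r (σ k) * lam (σ k) * Hfun σ lam k u * (q ^ (k - 1) * s ^ u) :=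
    sum_congr rfl fun k _ => by
      rw [mul_sum]
      exact sum_congr rfl fun u _ => by ring
  rw [funext fun p : ℕ × ℕ => revenue_term_eq_sum_geomTail N σ r lam q s p.1 p.2, hrhs]
  exact hasSum_sum fun k _ => hasSum_sum fun u _ =>
    (hasSum_geomTail_mul_geomTail hq hs (k - 1) u).mul_left _

/-- the expected revenue, written as a double series over the geometric
attention span `v` and budget `b` (indexed here by `v+1, b+1` with `v, b : ℕ`), is an
absolutely convergent series whose sum equals
`Σ_{k=1}^N r_{σ_k} λ_{σ_k} q^{k-1} Σ_{u=0}^{k-1} s^u H_σ(k,u;λ)`. -/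
theorem stmt1 (N : ℕ) (hN : 1 ≤ N) (σ : ℕ → ℕ)
    (hσ : Set.BijOn σ (Set.Icc 1 N) (Set.Icc 1 N))
    (r lam : ℕ → ℝ)
    (hr : ∀ k ∈ Set.Icc 1 N, 0 ≤ r k)
    (hlam : ∀ k ∈ Set.Icc 1 N, lam k ∈ Set.Icc (0 : ℝ) 1)
    (q s : ℝ) (hq : q ∈ Set.Ico (0 : ℝ) 1) (hs : s ∈ Set.Ico (0 : ℝ) 1) :
    Summable (fun p : ℕ × ℕ =>
      q ^ p.1 * (1 - q) * (s ^ p.2 * (1 - s)) *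
        ∑ Q ∈ (Finset.Icc 1 (min (p.1 + 1) N)).powerset,
          Pbuy σ lam (min (p.1 + 1) N) (p.2 + 1) Q * ∑ i ∈ Q, r (σ i)) ∧
    (∑' v : ℕ, ∑' b : ℕ,
        q ^ v * (1 - q) * (s ^ b * (1 - s)) *
          ∑ Q ∈ (Finset.Icc 1 (min (v + 1) N)).powerset,
            Pbuy σ lam (min (v + 1) N) (b + 1) Q * ∑ i ∈ Q, r (σ i)) =
      ∑ k ∈ Finset.Icc 1 N, r (σ k) * lam (σ k) * q ^ (k - 1) *
        ∑ u ∈ Finset.range k, s ^ u * Hfun σ lam k u :=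
  stmt1_general N σ r lam q s hq hs
end

section
/- Let N ≥ 1, let r : {1,…,N} → [0,∞), let λ, λ̃ : {1,…,N} → [0,1] with λ_k ≤ λ̃_k for all k, and let q, q̃, s, s̃ ∈ [0,1] with q ≤ q̃ < 1 and q s ≤ q̃ s̃. If σ* is a permutation of {1,…,N} attaining the maximum of Revenue(σ; λ, q, s) over all permutations σ of {1,…,N}, then Revenue(σ*; λ, q, s) ≤ Revenue(σ*; λ̃, q̃, s̃). -/
/-!
In Horner form the revenue of a ranking `j₁ j₂ …` is `r₁λ₁ + c₁ (r₂λ₂ + c₂ (…))`, where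
`c = q (1 - λ + sλ)` is the probability that the customer goes on to the next item. Comparing an
optimal ranking with the one that moves its first item to the end gives `(1 - c₁) V ≤ r₁λ₁` for the
value `V` of the remaining items, hence `r₁ ≥ q (1 - s) V`, which is exactly what makes
`r₁λ₁ + c₁ V` nondecreasing in `λ₁`. The remaining items form an optimal ranking as well whenever
`c₁ > 0`, so raising the purchase probabilities from the front does not decrease the revenue.
Finally every `c = q (1 - λ) + qs λ` grows with `q` and `qs`.
-/

open Finset

/-- The expected revenue of ranking policy `σ`. -/
noncomputable def Revenue (N : ℕ) (σ : ℕ → ℕ) (r lam : ℕ → ℝ) (q s : ℝ) : ℝ :=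
  ∑ k ∈ Finset.Icc 1 N, r (σ k) * lam (σ k) * q ^ (k - 1) *
    ∑ u ∈ Finset.range k, s ^ u * Hfun σ lam k u

theorem Finset.prod_mul_add_eq_sum_powersetCard {ι R : Type*} [DecidableEq ι] [CommSemiring R]
    (S : Finset ι) (x y : ι → R) (s : R) :
    ∏ i ∈ S, (s * x i + y i) = ∑ u ∈ range (#S + 1),
      s ^ u * ∑ Q ∈ S.powersetCard u, (∏ i ∈ Q, x i) * ∏ i ∈ S \ Q, y i := by
  have hcard : ∀ Q ∈ S.powerset, #Q ∈ range (#S + 1) := fun Q hQ =>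
    mem_range_succ_iff.2 (card_le_card (mem_powerset.1 hQ))
  rw [prod_add, ← sum_fiberwise_of_maps_to hcard]
  refine sum_congr rfl fun u _ => ?_
  rw [← powersetCard_eq_filter, mul_sum]
  refine sum_congr rfl fun Q hQ => ?_
  rw [prod_mul_distrib, prod_const, (mem_powersetCard.1 hQ).2, mul_assoc]

theorem sum_pow_mul_Hfun {k : ℕ} (hk : 1 ≤ k) (σ : ℕ → ℕ) (lam : ℕ → ℝ) (s : ℝ) :
    ∑ u ∈ range k, s ^ u * Hfun σ lam k u =
      ∏ i ∈ Icc 1 (k - 1), (1 - lam (σ i) + s * lam (σ i)) := by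
  have hcard : #(Icc 1 (k - 1)) + 1 = k := by simp; omega
  rw [← prod_congr rfl fun i _ => add_comm (s * lam (σ i)) _,
    prod_mul_add_eq_sum_powersetCard, hcard]
  rfl

section Cascade

variable {α : Type*} (a c : α → ℝ)

def cascadeValue : List α → ℝ
  | [] => 0
  | j :: l => a j + c j * cascadeValue l

@[simp] theorem cascadeValue_nil : cascadeValue a c [] = 0 := rfl

@[simp] theorem cascadeValue_cons (j : α) (l : List α) :
    cascadeValue a c (j :: l) = a j + c j * cascadeValue a c l := rfl

theorem cascadeValue_append (l₁ l₂ : List α) :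
    cascadeValue a c (l₁ ++ l₂) = cascadeValue a c l₁ + (l₁.map c).prod * cascadeValue a c l₂ := by
  induction l₁ with
  | nil => simp
  | cons j l ih =>
    simp only [List.cons_append, cascadeValue_cons, ih, List.map_cons, List.prod_cons]
    ring

theorem cascadeValue_concat (l : List α) (j : α) :
    cascadeValue a c (l ++ [j]) = cascadeValue a c l + (l.map c).prod * a j := by
  simp [cascadeValue_append]

variable {a c}

theorem cascadeValue_nonneg {l : List α} (ha : ∀ j ∈ l, 0 ≤ a j) (hc : ∀ j ∈ l, 0 ≤ c j) :
    0 ≤ cascadeValue a c l := by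
  induction l with
  | nil => simp
  | cons j l ih =>
    simp only [List.forall_mem_cons] at ha hc
    exact add_nonneg ha.1 (mul_nonneg hc.1 (ih ha.2 hc.2))

theorem cascadeValue_mono {a' c' : α → ℝ} {l : List α} (ha₀ : ∀ j ∈ l, 0 ≤ a j)
    (ha : ∀ j ∈ l, a j ≤ a' j) (hc₀ : ∀ j ∈ l, 0 ≤ c j) (hc : ∀ j ∈ l, c j ≤ c' j) :
    cascadeValue a c l ≤ cascadeValue a' c' l := by
  induction l with
  | nil => simp
  | cons j l ih =>
    simp only [List.forall_mem_cons] at ha₀ ha hc₀ hc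
    simp only [cascadeValue_cons]
    gcongr ?_ + ?_
    · exact ha.1
    · exact mul_le_mul hc.1 (ih ha₀.2 ha.2 hc₀.2 hc.2) (cascadeValue_nonneg ha₀.2 hc₀.2)
        (hc₀.1.trans hc.1)

theorem cascadeValue_map_range' (σ : ℕ → α) (m n : ℕ) :
    cascadeValue a c ((List.range' m n).map σ)
      = ∑ k ∈ Ico m (m + n), a (σ k) * ∏ i ∈ Ico m k, c (σ i) := by
  induction n generalizing m with
  | zero => simp
  | succ n ih =>
    rw [sum_eq_sum_Ico_succ_bot (show m < m + (n + 1) by omega), Ico_self, prod_empty, mul_one,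
      List.range'_succ, List.map_cons, cascadeValue_cons, ih, mul_sum,
      show m + (n + 1) = m + 1 + n by omega]
    congr 1
    refine sum_congr rfl fun k hk => ?_
    rw [prod_eq_prod_Ico_succ_bot (a := m) (by simp at hk; omega)]
    ring

def IsOptimalOrder (a c : α → ℝ) (l : List α) : Prop :=
  ∀ l', l'.Perm l → cascadeValue a c l' ≤ cascadeValue a c l

theorem IsOptimalOrder.concat_le {j : α} {l : List α} (h : IsOptimalOrder a c (j :: l)) :
    cascadeValue a c (l ++ [j]) ≤ cascadeValue a c (j :: l) :=
  h _ (List.perm_append_singleton _ _)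

theorem IsOptimalOrder.of_cons {j : α} {l : List α} (h : IsOptimalOrder a c (j :: l))
    (hc : 0 < c j) : IsOptimalOrder a c l := fun l' hl' =>
  le_of_mul_le_mul_left (by simpa using h _ (hl'.cons j)) hc

theorem one_sub_mul_cascadeValue_le {j : α} {l : List α} (h : IsOptimalOrder a c (j :: l))
    (ha : 0 ≤ a j) (hc : ∀ i ∈ l, 0 ≤ c i) : (1 - c j) * cascadeValue a c l ≤ a j := by
  have hP : 0 ≤ (l.map c).prod * a j :=
    mul_nonneg (List.prod_nonneg (by simpa using hc)) ha
  have := h.concat_le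
  rw [cascadeValue_concat, cascadeValue_cons] at this
  linarith

end Cascade

theorem Revenue_eq_cascadeValue (N : ℕ) (σ : ℕ → ℕ) (r lam : ℕ → ℝ) (q s : ℝ) :
    Revenue N σ r lam q s = cascadeValue (fun j => r j * lam j)
      (fun j => q * (1 - lam j + s * lam j)) ((List.range' 1 N).map σ) := by
  rw [cascadeValue_map_range', Revenue, show Icc 1 N = Ico 1 (1 + N) by ext; simp; omega]
  refine sum_congr rfl fun k hk => ?_
  have hk1 : 1 ≤ k := (mem_Ico.1 hk).1
  rw [sum_pow_mul_Hfun hk1, show Icc 1 (k - 1) = Ico 1 k by ext; simp; omega, prod_mul_distrib,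
    prod_const, Nat.card_Ico]
  ring

theorem purchase_upgrade_le {r p p' q s V : ℝ} (hq1 : q < 1)
    (hp : 0 ≤ p) (hpp' : p ≤ p') (hr : 0 ≤ r) (hV : 0 ≤ V)
    (h : (1 - q * (1 - p + s * p)) * V ≤ r * p) :
    r * p + q * (1 - p + s * p) * V ≤ r * p' + q * (1 - p' + s * p') * V := by
  have hbound : q * (1 - s) * V ≤ r := by
    rcases hp.eq_or_lt with rfl | hp
    · have : V = 0 := by nlinarith
      simpa [this] using hr
    · refine le_of_mul_le_mul_right ?_ hp
      nlinarith [mul_nonneg (sub_nonneg.2 hq1.le) hV]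
  nlinarith [mul_nonneg (sub_nonneg.2 hpp') (sub_nonneg.2 hbound)]

theorem mul_one_sub_add_mul_nonneg {q s p : ℝ} (hq : 0 ≤ q) (hs : 0 ≤ s) (hp₀ : 0 ≤ p)
    (hp₁ : p ≤ 1) : 0 ≤ q * (1 - p + s * p) :=
  mul_nonneg hq (by nlinarith [mul_nonneg hs hp₀])

theorem mul_one_sub_add_mul_le_of_le {q s p p' : ℝ} (hq : 0 ≤ q) (hs : s ≤ 1) (hp : p ≤ p') :
    q * (1 - p' + s * p') ≤ q * (1 - p + s * p) :=
  mul_le_mul_of_nonneg_left (by nlinarith) hq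

theorem mul_one_sub_add_mul_le_of_le_of_mul_le {q q' s s' p : ℝ} (hq : q ≤ q')
    (hqs : q * s ≤ q' * s') (hp₀ : 0 ≤ p) (hp₁ : p ≤ 1) :
    q * (1 - p + s * p) ≤ q' * (1 - p + s' * p) := by
  nlinarith [mul_nonneg (sub_nonneg.2 hq) (sub_nonneg.2 hp₁), mul_nonneg (sub_nonneg.2 hqs) hp₀]

theorem cascadeValue_le_of_isOptimalOrder {α : Type*} {r lam lamT : α → ℝ} {q s : ℝ}
    (hq0 : 0 ≤ q) (hq1 : q < 1) (hs0 : 0 ≤ s) (hs1 : s ≤ 1) {l : List α}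
    (hr : ∀ j ∈ l, 0 ≤ r j) (hlam : ∀ j ∈ l, 0 ≤ lam j) (hlamT : ∀ j ∈ l, lamT j ≤ 1)
    (hle : ∀ j ∈ l, lam j ≤ lamT j)
    (hopt : IsOptimalOrder (fun j => r j * lam j) (fun j => q * (1 - lam j + s * lam j)) l) :
    cascadeValue (fun j => r j * lam j) (fun j => q * (1 - lam j + s * lam j)) l ≤
      cascadeValue (fun j => r j * lamT j) (fun j => q * (1 - lamT j + s * lamT j)) l := by
  induction l with
  | nil => simp
  | cons j l ih =>
    have hc : ∀ i ∈ j :: l, 0 ≤ q * (1 - lam i + s * lam i) := fun i hi =>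
      mul_one_sub_add_mul_nonneg hq0 hs0 (hlam i hi) ((hle i hi).trans (hlamT i hi))
    have hcT := mul_one_sub_add_mul_nonneg hq0 hs0 ((hlam j List.mem_cons_self).trans
      (hle j List.mem_cons_self)) (hlamT j List.mem_cons_self)
    have hcT_le := mul_one_sub_add_mul_le_of_le hq0 hs1 (hle j List.mem_cons_self)
    simp only [List.forall_mem_cons] at hr hlam hlamT hle
    have hV := cascadeValue_nonneg (fun i hi => mul_nonneg (hr.2 i hi) (hlam.2 i hi))
      (fun i hi => hc i (List.mem_cons_of_mem j hi))
    rw [cascadeValue_cons, cascadeValue_cons]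
    calc _ ≤ r j * lamT j + q * (1 - lamT j + s * lamT j) *
          cascadeValue (fun j => r j * lam j) (fun j => q * (1 - lam j + s * lam j)) l :=
        purchase_upgrade_le hq1 hlam.1 hle.1 hr.1 hV (one_sub_mul_cascadeValue_le hopt
          (mul_nonneg hr.1 hlam.1) fun i hi => hc i (List.mem_cons_of_mem j hi))
      _ ≤ _ := by
        gcongr _ + ?_
        rcases (hc j List.mem_cons_self).eq_or_lt with hc0 | hcpos
        · simp [le_antisymm (hcT_le.trans_eq hc0.symm) hcT]
        · exact mul_le_mul_of_nonneg_left (ih hr.2 hlam.2 hlamT.2 hle.2 (hopt.of_cons hcpos)) hcT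

theorem mem_range'_one_iff {N k : ℕ} : k ∈ List.range' 1 N ↔ k ∈ Set.Icc 1 N := by
  simp [List.mem_range'_1]
  omega

theorem Set.BijOn.map_range'_perm {N : ℕ} {σ : ℕ → ℕ}
    (hσ : Set.BijOn σ (Set.Icc 1 N) (Set.Icc 1 N)) :
    ((List.range' 1 N).map σ).Perm (List.range' 1 N) := by
  refine (List.perm_ext_iff_of_nodup ?_ List.nodup_range').2 fun k => ?_
  · exact (List.nodup_range').map_on fun i hi j hj => hσ.injOn (mem_range'_one_iff.1 hi)
      (mem_range'_one_iff.1 hj)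
  · simp only [List.mem_map, mem_range'_one_iff]
    exact ⟨fun ⟨i, hi, hik⟩ => hik ▸ hσ.mapsTo hi, fun hk => hσ.surjOn hk⟩

theorem List.Perm.exists_bijOn_map_range' {N : ℕ} {l : List ℕ} (h : l.Perm (List.range' 1 N)) :
    ∃ σ : ℕ → ℕ, Set.BijOn σ (Set.Icc 1 N) (Set.Icc 1 N) ∧ (List.range' 1 N).map σ = l := by
  set σ : ℕ → ℕ := fun k => l.getD (k - 1) 0
  have hmap : (List.range' 1 N).map σ = l := by
    refine List.ext_getElem (by simp [h.length_eq]) fun i h₁ h₂ => ?_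
    simp [σ, List.getElem?_eq_getElem h₂]
  refine ⟨σ, ⟨fun k hk => ?_, fun i hi j hj hij => ?_, fun k hk => ?_⟩, hmap⟩
  · exact mem_range'_one_iff.1 (h.subset (hmap ▸ List.mem_map_of_mem (mem_range'_one_iff.2 hk)))
  · exact List.inj_on_of_nodup_map (hmap ▸ h.nodup_iff.2 List.nodup_range')
      (mem_range'_one_iff.2 hi) (mem_range'_one_iff.2 hj) hij
  · obtain ⟨i, hi, rfl⟩ := List.mem_map.1 (hmap ▸ h.mem_iff.2 (mem_range'_one_iff.2 hk))
    exact ⟨i, mem_range'_one_iff.1 hi, rfl⟩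

theorem stmt7_general (N : ℕ) (r lam lamT : ℕ → ℝ)
    (hr : ∀ k ∈ Set.Icc 1 N, 0 ≤ r k)
    (hlam : ∀ k ∈ Set.Icc 1 N, lam k ∈ Set.Icc (0 : ℝ) 1)
    (hlamT : ∀ k ∈ Set.Icc 1 N, lamT k ∈ Set.Icc (0 : ℝ) 1)
    (hle : ∀ k ∈ Set.Icc 1 N, lam k ≤ lamT k)
    (q qT s sT : ℝ)
    (hq : q ∈ Set.Icc (0 : ℝ) 1)
    (hs : s ∈ Set.Icc (0 : ℝ) 1)
    (hqle : q ≤ qT) (hqT1 : qT < 1) (hqs : q * s ≤ qT * sT)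
    (σstar : ℕ → ℕ) (hσstar : Set.BijOn σstar (Set.Icc 1 N) (Set.Icc 1 N))
    (hopt : ∀ σ : ℕ → ℕ, Set.BijOn σ (Set.Icc 1 N) (Set.Icc 1 N) →
      Revenue N σ r lam q s ≤ Revenue N σstar r lam q s) :
    Revenue N σstar r lam q s ≤ Revenue N σstar r lamT qT sT := by
  have hl := hσstar.map_range'_perm
  set l := (List.range' 1 N).map σstar
  have hmem : ∀ j ∈ l, j ∈ Set.Icc 1 N := fun j hj => mem_range'_one_iff.1 (hl.subset hj)
  have hlopt : IsOptimalOrder (fun j => r j * lam j) (fun j => q * (1 - lam j + s * lam j)) l :=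
    fun l' hl' => by
      obtain ⟨σ, hσ, rfl⟩ := (hl'.trans hl).exists_bijOn_map_range'
      simpa only [Revenue_eq_cascadeValue] using hopt σ hσ
  rw [Revenue_eq_cascadeValue, Revenue_eq_cascadeValue]
  calc _ ≤ cascadeValue (fun j => r j * lamT j) (fun j => q * (1 - lamT j + s * lamT j)) l :=
        cascadeValue_le_of_isOptimalOrder hq.1 (hqle.trans_lt hqT1) hs.1 hs.2
          (fun j hj => hr j (hmem j hj)) (fun j hj => (hlam j (hmem j hj)).1)
          (fun j hj => (hlamT j (hmem j hj)).2) (fun j hj => hle j (hmem j hj)) hlopt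
    _ ≤ _ := by
      refine cascadeValue_mono (fun j hj => ?_) (fun _ _ => le_rfl) (fun j hj => ?_)
        (fun j hj => ?_)
      · exact mul_nonneg (hr j (hmem j hj)) (hlamT j (hmem j hj)).1
      · exact mul_one_sub_add_mul_nonneg hq.1 hs.1 (hlamT j (hmem j hj)).1 (hlamT j (hmem j hj)).2
      · exact mul_one_sub_add_mul_le_of_le_of_mul_le hqle hqs (hlamT j (hmem j hj)).1
          (hlamT j (hmem j hj)).2

/-- the optimal revenue is monotone in the parameters: if `λ ≤ λ̃`,
`q ≤ q̃ < 1` and `qs ≤ q̃s̃`, then `Revenue(σ*; λ, q, s) ≤ Revenue(σ*; λ̃, q̃, s̃)`. -/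
theorem stmt7 (N : ℕ) (hN : 1 ≤ N) (r lam lamT : ℕ → ℝ)
    (hr : ∀ k ∈ Set.Icc 1 N, 0 ≤ r k)
    (hlam : ∀ k ∈ Set.Icc 1 N, lam k ∈ Set.Icc (0 : ℝ) 1)
    (hlamT : ∀ k ∈ Set.Icc 1 N, lamT k ∈ Set.Icc (0 : ℝ) 1)
    (hle : ∀ k ∈ Set.Icc 1 N, lam k ≤ lamT k)
    (q qT s sT : ℝ)
    (hq : q ∈ Set.Icc (0 : ℝ) 1) (hqT : qT ∈ Set.Icc (0 : ℝ) 1)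
    (hs : s ∈ Set.Icc (0 : ℝ) 1) (hsT : sT ∈ Set.Icc (0 : ℝ) 1)
    (hqle : q ≤ qT) (hqT1 : qT < 1) (hqs : q * s ≤ qT * sT)
    (σstar : ℕ → ℕ) (hσstar : Set.BijOn σstar (Set.Icc 1 N) (Set.Icc 1 N))
    (hopt : ∀ σ : ℕ → ℕ, Set.BijOn σ (Set.Icc 1 N) (Set.Icc 1 N) →
      Revenue N σ r lam q s ≤ Revenue N σstar r lam q s) :
    Revenue N σstar r lam q s ≤ Revenue N σstar r lamT qT sT :=
  stmt7_general N r lam lamT hr hlam hlamT hle q qT s sT hq hs hqle hqT1 hqs σstar hσstar hopt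
end

section
/- Let N ≥ 1, ε_Q ∈ (0,1), let σ be any permutation of {1,…,N}, let r : {1,…,N} → [0, r_max] for some r_max ≥ 0, let λ, λ̃ : {1,…,N} → [0,1] with λ_k ≤ λ̃_k for all k, and let q, q̃, s, s̃ ∈ [0,1] with q ≤ q̃ ≤ 1 − ε_Q and q s ≤ q̃ s̃. Then Revenue(σ; λ̃, q̃, s̃) − Revenue(σ; λ, q, s) ≤ (r_max / ε_Q) · Σ_{k=1}^{N} ( |q − q̃| (1 − λ_{σ_k}) + 3 |λ_{σ_k} − λ̃_{σ_k}| + |q s − q̃ s̃| λ_{σ_k} ) · A_σ(k; q, s, λ). -/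
open Finset

/-- `Afun σ lam q s k = A_σ(k; q, s, λ) = q^{k-1} Σ_{u=0}^{k-1} s^u H_σ(k,u;λ)`. -/
noncomputable def Afun (σ : ℕ → ℕ) (lam : ℕ → ℝ) (q s : ℝ) (k : ℕ) : ℝ :=
  q ^ (k - 1) * ∑ u ∈ Finset.range k, s ^ u * Hfun σ lam k u

/-!
Expanding the `H_σ`-sum binomially gives `A_σ(k) = ∏_{i<k} g_i` with continuation factors
`g_i = q (1 - λ_{σ_i} + s λ_{σ_i})`, so the revenue is `∑_k r_{σ_k} λ_{σ_k} A_σ(k)`. The perturbed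
factors satisfy `g̃_i ≤ q̃ ≤ 1 - ε_Q`, hence from
`Ã_{k+1} - A_{k+1} = g̃_k (Ã_k - A_k) + (g̃_k - g_k) A_k` the positive part `D_k` of `Ã_k - A_k`
obeys `D_{k+1} ≤ (1 - ε_Q) D_k + d_k A_k`, where `d_k ≥ g̃_k - g_k` is the bracket of the theorem
with coefficient 1 on `|λ - λ̃|`. Summing this recursion gives `ε_Q ∑ D_k ≤ ∑ d_k A_k`; the change
of `λ` in the weight `r λ` itself adds at most `r_max |λ - λ̃| A_k`.
-/

theorem prod_Icc_one_eq_prod_range {M : Type*} [CommMonoid M] (f : ℕ → M) (n : ℕ) :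
    ∏ k ∈ Icc 1 n, f k = ∏ k ∈ range n, f (k + 1) := by
  rw [range_eq_Ico, prod_Ico_add' f 0 n 1, zero_add, Finset.Ico_add_one_right_eq_Icc]

theorem sum_Icc_one_eq_sum_range {M : Type*} [AddCommMonoid M] (f : ℕ → M) (n : ℕ) :
    ∑ k ∈ Icc 1 n, f k = ∑ k ∈ range n, f (k + 1) := by
  rw [range_eq_Ico, sum_Ico_add' f 0 n 1, zero_add, Finset.Ico_add_one_right_eq_Icc]

theorem sum_range_pow_mul_sum_powersetCard {ι R : Type*} [DecidableEq ι] [CommSemiring R]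
    (S : Finset ι) (a b : ι → R) (s : R) :
    ∑ u ∈ range (#S + 1), s ^ u * ∑ Q ∈ S.powersetCard u, (∏ i ∈ Q, a i) * ∏ i ∈ S \ Q, b i =
      ∏ i ∈ S, (s * a i + b i) := by
  rw [prod_add, sum_powerset]
  refine sum_congr rfl fun u _ => ?_
  rw [mul_sum]
  refine sum_congr rfl fun Q hQ => ?_
  rw [prod_mul_distrib, prod_const, (mem_powersetCard.mp hQ).2, mul_assoc]

theorem mul_sum_range_add_le_of_le_one_sub_mul_add {ε : ℝ} {x a : ℕ → ℝ} {n : ℕ} (h0 : x 0 ≤ 0)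
    (hstep : ∀ k < n, x (k + 1) ≤ (1 - ε) * x k + a k) :
    ε * ∑ k ∈ range n, x k + x n ≤ ∑ k ∈ range n, a k := by
  induction n with
  | zero => simpa using h0
  | succ n ih =>
    have hlt := ih fun k hk => hstep k (by omega)
    have hlast := hstep n (by omega)
    rw [sum_range_succ, sum_range_succ, mul_add]
    linarith

theorem mul_sum_max_prod_sub_prod_le {ε : ℝ} {g gT a : ℕ → ℝ} {N : ℕ}
    (hg : ∀ i < N, 0 ≤ g i) (hgT : ∀ i < N, gT i ∈ Set.Icc 0 (1 - ε))
    (ha : ∀ i < N, gT i - g i ≤ a i) (ha0 : ∀ i < N, 0 ≤ a i) :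
    ε * ∑ k ∈ range N, max (∏ i ∈ range k, gT i - ∏ i ∈ range k, g i) 0 ≤
      ∑ k ∈ range N, a k * ∏ i ∈ range k, g i := by
  set D := fun k => max (∏ i ∈ range k, gT i - ∏ i ∈ range k, g i) 0 with hD
  have hstep : ∀ k < N, D (k + 1) ≤ (1 - ε) * D k + a k * ∏ i ∈ range k, g i := by
    intro k hk
    have hP : 0 ≤ ∏ i ∈ range k, g i :=
      prod_nonneg fun i hi => hg i ((mem_range.mp hi).trans hk)
    have hDk : ∏ i ∈ range k, gT i - ∏ i ∈ range k, g i ≤ D k := le_max_left _ _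
    have hDk0 : 0 ≤ D k := le_max_right _ _
    obtain ⟨hgT0, hgT1⟩ := hgT k hk
    refine max_le ?_ (add_nonneg (mul_nonneg (hgT0.trans hgT1) hDk0) (mul_nonneg (ha0 k hk) hP))
    calc ∏ i ∈ range (k + 1), gT i - ∏ i ∈ range (k + 1), g i
        = gT k * (∏ i ∈ range k, gT i - ∏ i ∈ range k, g i) +
            (gT k - g k) * ∏ i ∈ range k, g i := by
          rw [prod_range_succ, prod_range_succ]; ring
      _ ≤ (1 - ε) * D k + a k * ∏ i ∈ range k, g i := by
          refine add_le_add ?_ (mul_le_mul_of_nonneg_right (ha k hk) hP)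
          exact (mul_le_mul_of_nonneg_left hDk hgT0).trans (mul_le_mul_of_nonneg_right hgT1 hDk0)
  have hsum := mul_sum_range_add_le_of_le_one_sub_mul_add (x := D) (by simp [hD]) hstep
  linarith [le_max_right (∏ i ∈ range N, gT i - ∏ i ∈ range N, g i) 0]

theorem sum_mul_prod_sub_sum_mul_prod_le {ε R : ℝ} {N : ℕ} {r l lT g gT a : ℕ → ℝ}
    (hε : ε ∈ Set.Ioc 0 1) (hR : 0 ≤ R) (hr : ∀ k < N, r k ∈ Set.Icc 0 R)
    (hlT : ∀ k < N, lT k ∈ Set.Icc (0 : ℝ) 1)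
    (hg : ∀ i < N, 0 ≤ g i) (hgT : ∀ i < N, gT i ∈ Set.Icc 0 (1 - ε))
    (ha : ∀ i < N, gT i - g i ≤ a i) (ha0 : ∀ i < N, 0 ≤ a i) :
    ∑ k ∈ range N, r k * lT k * ∏ i ∈ range k, gT i -
        ∑ k ∈ range N, r k * l k * ∏ i ∈ range k, g i ≤
      R / ε * ∑ k ∈ range N, (a k + |l k - lT k|) * ∏ i ∈ range k, g i := by
  set D := fun k => max (∏ i ∈ range k, gT i - ∏ i ∈ range k, g i) 0
  have hterm : ∀ k ∈ range N, r k * lT k * ∏ i ∈ range k, gT i - r k * l k * ∏ i ∈ range k, g i ≤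
      R * D k + R * (|l k - lT k| * ∏ i ∈ range k, g i) := by
    intro k hk
    have hk := mem_range.mp hk
    have hP : 0 ≤ ∏ i ∈ range k, g i :=
      prod_nonneg fun i hi => hg i ((mem_range.mp hi).trans hk)
    obtain ⟨hr0, hrR⟩ := hr k hk
    obtain ⟨hlT0, hlT1⟩ := hlT k hk
    have hweight : r k * lT k ∈ Set.Icc 0 R :=
      ⟨mul_nonneg hr0 hlT0, (mul_le_of_le_one_right hr0 hlT1).trans hrR⟩
    have hDk : ∏ i ∈ range k, gT i - ∏ i ∈ range k, g i ≤ D k := le_max_left _ _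
    have hDk0 : 0 ≤ D k := le_max_right _ _
    calc r k * lT k * ∏ i ∈ range k, gT i - r k * l k * ∏ i ∈ range k, g i
        = r k * lT k * (∏ i ∈ range k, gT i - ∏ i ∈ range k, g i) +
            r k * ((lT k - l k) * ∏ i ∈ range k, g i) := by ring
      _ ≤ R * D k + R * (|l k - lT k| * ∏ i ∈ range k, g i) := by
          refine add_le_add ((mul_le_mul_of_nonneg_left hDk hweight.1).trans
            (mul_le_mul_of_nonneg_right hweight.2 hDk0)) ?_
          refine (mul_le_mul_of_nonneg_left ?_ hr0).trans
            (mul_le_mul_of_nonneg_right hrR (mul_nonneg (abs_nonneg _) hP))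
          exact mul_le_mul_of_nonneg_right (abs_sub_comm (l k) _ ▸ le_abs_self _) hP
  have hD := mul_sum_max_prod_sub_prod_le hg hgT ha ha0
  have hRε : 0 ≤ R / ε := div_nonneg hR hε.1.le
  calc ∑ k ∈ range N, r k * lT k * ∏ i ∈ range k, gT i -
        ∑ k ∈ range N, r k * l k * ∏ i ∈ range k, g i
      ≤ ∑ k ∈ range N, (R * D k + R * (|l k - lT k| * ∏ i ∈ range k, g i)) := by
        rw [← sum_sub_distrib]; exact sum_le_sum hterm
    _ = R / ε * (ε * ∑ k ∈ range N, D k) +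
          R * ∑ k ∈ range N, |l k - lT k| * ∏ i ∈ range k, g i := by
        rw [sum_add_distrib, ← mul_sum, ← mul_sum, ← mul_assoc, div_mul_cancel₀ R hε.1.ne']
    _ ≤ R / ε * ∑ k ∈ range N, a k * ∏ i ∈ range k, g i +
          R / ε * ∑ k ∈ range N, |l k - lT k| * ∏ i ∈ range k, g i := by
        gcongr
        · exact sum_nonneg fun k hk => mul_nonneg (abs_nonneg _)
            (prod_nonneg fun i hi => hg i ((mem_range.mp hi).trans (mem_range.mp hk)))
        · exact le_div_self hR hε.1 hε.2
    _ = R / ε * ∑ k ∈ range N, (a k + |l k - lT k|) * ∏ i ∈ range k, g i := by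
        rw [← mul_add, ← sum_add_distrib]; simp only [add_mul]

def continuationProb (q s l : ℝ) : ℝ := q * (1 - l + s * l)

section continuationProb

variable {q s l qT sT lT : ℝ}

theorem continuationProb_nonneg (hq : 0 ≤ q) (hs : 0 ≤ s) (hl : l ∈ Set.Icc (0 : ℝ) 1) :
    0 ≤ continuationProb q s l :=
  mul_nonneg hq (add_nonneg (sub_nonneg.2 hl.2) (mul_nonneg hs hl.1))

theorem continuationProb_le (hq : 0 ≤ q) (hs : s ≤ 1) (hl : 0 ≤ l) : continuationProb q s l ≤ q :=
  mul_le_of_le_one_right hq (by nlinarith)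

theorem continuationProb_sub_le (hqT : qT ∈ Set.Icc (0 : ℝ) 1)
    (hsT : sT ∈ Set.Icc (0 : ℝ) 1) (hl : l ∈ Set.Icc (0 : ℝ) 1) :
    continuationProb qT sT lT - continuationProb q s l ≤
      |q - qT| * (1 - l) + |l - lT| + |q * s - qT * sT| * l := by
  have hdecomp : continuationProb qT sT lT - continuationProb q s l =
      (qT - q) * (1 - l) + (l - lT) * (qT * (1 - sT)) + (qT * sT - q * s) * l := by
    unfold continuationProb; ring
  have hscale : qT * (1 - sT) ∈ Set.Icc (0 : ℝ) 1 :=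
    ⟨mul_nonneg hqT.1 (sub_nonneg.2 hsT.2), by nlinarith [mul_nonneg hqT.1 hsT.1, hqT.2]⟩
  rw [hdecomp]
  gcongr ?_ + ?_ + ?_
  · exact mul_le_mul_of_nonneg_right (abs_sub_comm q qT ▸ le_abs_self _) (sub_nonneg.2 hl.2)
  · exact (mul_le_mul_of_nonneg_right (le_abs_self _) hscale.1).trans
      (mul_le_of_le_one_right (abs_nonneg _) hscale.2)
  · exact mul_le_mul_of_nonneg_right (abs_sub_comm (q * s) _ ▸ le_abs_self _) hl.1

end continuationProb

theorem Afun_succ (σ : ℕ → ℕ) (lam : ℕ → ℝ) (q s : ℝ) (k : ℕ) :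
    Afun σ lam q s (k + 1) = ∏ i ∈ range k, continuationProb q s (lam (σ (i + 1))) := by
  have h := sum_range_pow_mul_sum_powersetCard (Icc 1 k) (fun i => lam (σ i))
    (fun i => 1 - lam (σ i)) s
  rw [Nat.card_Icc, add_tsub_cancel_right, prod_Icc_one_eq_prod_range] at h
  simp only [Afun, Hfun, add_tsub_cancel_right, h, continuationProb, prod_mul_distrib, prod_const,
    card_range]
  ring_nf

theorem Revenue_eq_sum_range (N : ℕ) (σ : ℕ → ℕ) (r lam : ℕ → ℝ) (q s : ℝ) :
    Revenue N σ r lam q s = ∑ k ∈ range N, r (σ (k + 1)) * lam (σ (k + 1)) *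
      ∏ i ∈ range k, continuationProb q s (lam (σ (i + 1))) := by
  rw [Revenue, sum_Icc_one_eq_sum_range]
  refine sum_congr rfl fun k _ => ?_
  rw [← Afun_succ, Afun, mul_assoc]

theorem stmt8_general (N : ℕ) (εQ : ℝ) (hεQ : εQ ∈ Set.Ioo (0 : ℝ) 1)
    (σ : ℕ → ℕ) (hσ : Set.BijOn σ (Set.Icc 1 N) (Set.Icc 1 N))
    (rmax : ℝ) (hrmax : 0 ≤ rmax)
    (r : ℕ → ℝ) (hr : ∀ k ∈ Set.Icc 1 N, r k ∈ Set.Icc 0 rmax)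
    (lam lamT : ℕ → ℝ)
    (hlam : ∀ k ∈ Set.Icc 1 N, lam k ∈ Set.Icc (0 : ℝ) 1)
    (hlamT : ∀ k ∈ Set.Icc 1 N, lamT k ∈ Set.Icc (0 : ℝ) 1)
    (q qT s sT : ℝ)
    (hq : q ∈ Set.Icc (0 : ℝ) 1) (hqT : qT ∈ Set.Icc (0 : ℝ) 1)
    (hs : s ∈ Set.Icc (0 : ℝ) 1) (hsT : sT ∈ Set.Icc (0 : ℝ) 1)
    (hqTε : qT ≤ 1 - εQ) :
    Revenue N σ r lamT qT sT - Revenue N σ r lam q s ≤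
      rmax / εQ *
        ∑ k ∈ Finset.Icc 1 N,
          (|q - qT| * (1 - lam (σ k)) + 3 * |lam (σ k) - lamT (σ k)| +
              |q * s - qT * sT| * lam (σ k)) *
            Afun σ lam q s k := by
  have hmaps : ∀ k < N, σ (k + 1) ∈ Set.Icc 1 N := fun k hk => hσ.mapsTo ⟨by omega, by omega⟩
  have hg : ∀ i < N, 0 ≤ continuationProb q s (lam (σ (i + 1))) := fun i hi =>
    continuationProb_nonneg hq.1 hs.1 (hlam _ (hmaps i hi))
  have hgT : ∀ i < N, continuationProb qT sT (lamT (σ (i + 1))) ∈ Set.Icc 0 (1 - εQ) :=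
    fun i hi => ⟨continuationProb_nonneg hqT.1 hsT.1 (hlamT _ (hmaps i hi)),
      (continuationProb_le hqT.1 hsT.2 (hlamT _ (hmaps i hi)).1).trans hqTε⟩
  have ha0 : ∀ i < N, 0 ≤ |q - qT| * (1 - lam (σ (i + 1))) + |lam (σ (i + 1)) - lamT (σ (i + 1))| +
      |q * s - qT * sT| * lam (σ (i + 1)) := fun i hi =>
    have hl := hlam _ (hmaps i hi)
    add_nonneg (add_nonneg (mul_nonneg (abs_nonneg _) (sub_nonneg.2 hl.2)) (abs_nonneg _))
      (mul_nonneg (abs_nonneg _) hl.1)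
  rw [Revenue_eq_sum_range, Revenue_eq_sum_range, sum_Icc_one_eq_sum_range]
  refine (sum_mul_prod_sub_sum_mul_prod_le ⟨hεQ.1, hεQ.2.le⟩ hrmax (fun k hk => hr _ (hmaps k hk))
    (fun k hk => hlamT _ (hmaps k hk)) hg hgT
    (fun i hi => continuationProb_sub_le hqT hsT (hlam _ (hmaps i hi))) ha0).trans ?_
  refine mul_le_mul_of_nonneg_left (sum_le_sum fun k hk => ?_) (div_nonneg hrmax hεQ.1.le)
  rw [Afun_succ]
  refine mul_le_mul_of_nonneg_right ?_
    (prod_nonneg fun i hi => hg i ((mem_range.mp hi).trans (mem_range.mp hk)))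
  linarith [abs_nonneg (lam (σ (k + 1)) - lamT (σ (k + 1)))]

/-- revenue perturbation bound. -/
theorem stmt8 (N : ℕ) (hN : 1 ≤ N) (εQ : ℝ) (hεQ : εQ ∈ Set.Ioo (0 : ℝ) 1)
    (σ : ℕ → ℕ) (hσ : Set.BijOn σ (Set.Icc 1 N) (Set.Icc 1 N))
    (rmax : ℝ) (hrmax : 0 ≤ rmax)
    (r : ℕ → ℝ) (hr : ∀ k ∈ Set.Icc 1 N, r k ∈ Set.Icc 0 rmax)
    (lam lamT : ℕ → ℝ)
    (hlam : ∀ k ∈ Set.Icc 1 N, lam k ∈ Set.Icc (0 : ℝ) 1)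
    (hlamT : ∀ k ∈ Set.Icc 1 N, lamT k ∈ Set.Icc (0 : ℝ) 1)
    (hle : ∀ k ∈ Set.Icc 1 N, lam k ≤ lamT k)
    (q qT s sT : ℝ)
    (hq : q ∈ Set.Icc (0 : ℝ) 1) (hqT : qT ∈ Set.Icc (0 : ℝ) 1)
    (hs : s ∈ Set.Icc (0 : ℝ) 1) (hsT : sT ∈ Set.Icc (0 : ℝ) 1)
    (hqle : q ≤ qT) (hqTε : qT ≤ 1 - εQ) (hqs : q * s ≤ qT * sT) :
    Revenue N σ r lamT qT sT - Revenue N σ r lam q s ≤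
      rmax / εQ *
        ∑ k ∈ Finset.Icc 1 N,
          (|q - qT| * (1 - lam (σ k)) + 3 * |lam (σ k) - lamT (σ k)| +
              |q * s - qT * sT| * lam (σ k)) *
            Afun σ lam q s k :=
  stmt8_general N εQ hεQ σ hσ rmax hrmax r hr lam lamT hlam hlamT q qT s sT hq hqT hs hsT hqTε
end

section
/- Let N ≥ 1, let σ be a permutation of {1,…,N}, let λ : {1,…,N} → [0,1], let v ∈ {1,…,N}, and let b ≥ 1 be an integer. Then Σ_{Q ⊆ {1,…,v}} P^buy(Q; v, b, λ, σ) = 1. -/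
open Finset

/-!
Extending the attention span from `v` to `v + 1` splits the mass of each
`Q ⊆ {1,…,v}` between `Q` and `Q ∪ {v + 1}`. If the budget is not yet exhausted, position
`v + 1` is bought with probability `λ` and skipped with probability `1 - λ`; if it is exhausted,
the consumer never looks at `v + 1` and `Q ∪ {v + 1}` gets probability `0`. Hence the total
mass does not depend on `v`, and for `v = 0` it is the mass `1` of `Q = ∅`.
-/

section Pbuy

variable (σ : ℕ → ℕ) (lam : ℕ → ℝ) {v : ℕ} (b : ℕ) {Q : Finset ℕ}

lemma Icc_succ_sdiff_of_subset (hQ : Q ⊆ Icc 1 v) :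
    Icc 1 (v + 1) \ Q = insert (v + 1) (Icc 1 v \ Q) := by
  rw [← insert_Icc_right_eq_Icc_add_one (by omega), insert_sdiff_of_notMem]
  exact fun h => by simpa using hQ h

lemma Icc_succ_sdiff_insert :
    Icc 1 (v + 1) \ insert (v + 1) Q = Icc 1 v \ Q := by
  rw [← insert_Icc_right_eq_Icc_add_one (by omega), insert_sdiff_insert, sdiff_insert_of_notMem]
  simp

lemma Pbuy_succ_of_subset (hQ : Q ⊆ Icc 1 v) :
    Pbuy σ lam (v + 1) b Q =
      if Q.card < b then (1 - lam (σ (v + 1))) * Pbuy σ lam v b Q else Pbuy σ lam v b Q := by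
  have hsup : Q.sup id < v + 1 :=
    Nat.lt_succ_of_le <| Finset.sup_le fun k hk => (mem_Icc.mp (hQ hk)).2
  unfold Pbuy
  rw [Icc_succ_sdiff_of_subset hQ, prod_insert (by simp), filter_insert,
    if_neg (not_le.mpr hsup)]
  split_ifs <;> ring

lemma Pbuy_succ_insert (hQ : Q ⊆ Icc 1 v) :
    Pbuy σ lam (v + 1) b (insert (v + 1) Q) =
      if Q.card < b then lam (σ (v + 1)) * Pbuy σ lam v b Q else 0 := by
  have hv : v + 1 ∉ Q := fun h => by simpa using hQ h
  have hsup : (insert (v + 1) Q).sup id = v + 1 := by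
    rw [sup_insert, id, sup_eq_left]
    exact Finset.sup_le fun k hk => Nat.le_succ_of_le (mem_Icc.mp (hQ hk)).2
  have hle : ∀ k ∈ Icc 1 v \ Q, k ≤ v + 1 := fun k hk =>
    Nat.le_succ_of_le (mem_Icc.mp (mem_sdiff.mp hk).1).2
  unfold Pbuy
  rw [card_insert_of_notMem hv, Icc_succ_sdiff_insert, hsup, filter_true_of_mem hle,
    prod_insert hv]
  split_ifs <;> first | omega | ring

lemma Pbuy_succ_add_Pbuy_succ_insert (hQ : Q ⊆ Icc 1 v) :
    Pbuy σ lam (v + 1) b Q + Pbuy σ lam (v + 1) b (insert (v + 1) Q) = Pbuy σ lam v b Q := by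
  rw [Pbuy_succ_of_subset σ lam b hQ, Pbuy_succ_insert σ lam b hQ]
  split_ifs <;> ring

lemma sum_Pbuy_succ :
    ∑ Q ∈ (Icc 1 (v + 1)).powerset, Pbuy σ lam (v + 1) b Q =
      ∑ Q ∈ (Icc 1 v).powerset, Pbuy σ lam v b Q := by
  rw [← insert_Icc_right_eq_Icc_add_one (by omega), sum_powerset_insert (by simp),
    ← sum_add_distrib]
  exact sum_congr rfl fun Q hQ => Pbuy_succ_add_Pbuy_succ_insert σ lam b (mem_powerset.mp hQ)

lemma sum_Pbuy : ∑ Q ∈ (Icc 1 v).powerset, Pbuy σ lam v b Q = 1 := by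
  induction v with
  | zero => rcases Nat.eq_zero_or_pos b with rfl | hb <;> simp [Pbuy, *]
  | succ v ih => rw [sum_Pbuy_succ, ih]

end Pbuy

theorem stmt13_general (σ : ℕ → ℕ)
    (lam : ℕ → ℝ)
    (v : ℕ) (b : ℕ) :
    ∑ Q ∈ (Finset.Icc 1 v).powerset, Pbuy σ lam v b Q = 1 :=
  sum_Pbuy σ lam b

/-- `P^buy(·; v, b, λ, σ)` is a probability distribution over subsets of
`{1,…,v}`. -/
theorem stmt13 (N : ℕ) (hN : 1 ≤ N) (σ : ℕ → ℕ)
    (hσ : Set.BijOn σ (Set.Icc 1 N) (Set.Icc 1 N))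
    (lam : ℕ → ℝ) (hlam : ∀ k ∈ Set.Icc 1 N, lam k ∈ Set.Icc (0 : ℝ) 1)
    (v : ℕ) (hv1 : 1 ≤ v) (hvN : v ≤ N) (b : ℕ) (hb : 1 ≤ b) :
    ∑ Q ∈ (Finset.Icc 1 v).powerset, Pbuy σ lam v b Q = 1 :=
  stmt13_general σ lam v b
end

section
/- Let m, N, T ≥ 1 be integers and α > 0. Let Φ : {1,…,T} → {0,…,N}, and let y_{t,k} ∈ ℝ^m with ‖y_{t,k}‖ ≤ 1 for each t ∈ {1,…,T} and k ∈ {1,…,Φ_t}. Define Σ_0 := α I_m and Σ_t := Σ_{t−1} + Σ_{k=1}^{Φ_t} y_{t,k} y_{t,k}ᵀ, and g_{t,k}² := y_{t,k}ᵀ (Σ_{t−1})^{−1} y_{t,k}. Then Σ_{t=1}^{T} Σ_{k=1}^{Φ_t} log(1 + g_{t,k}²) ≤ N m log(1 + TN/(m α)). -/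
/-!
Write `L t = log det Σ_t`. By the matrix determinant lemma,
`det (Σ_{t-1} + y yᵀ) = det Σ_{t-1} · (1 + yᵀ Σ_{t-1}⁻¹ y)`, and adding further rank-one terms
`y yᵀ` to a positive definite matrix never decreases its determinant; hence every summand of
round `t` is at most `L t - L (t-1)`, a round contributes at most `N (L t - L (t-1))`, and the
double sum telescopes to at most `N (L T - L 0)`. Finally `L 0 = m log α`, and AM-GM on the
eigenvalues of `Σ_T`, whose trace is at most `m α + T N`, gives
`L T ≤ m log (α + T N / m)`.
-/

open Finset Matrix

/-- `Sig m α Φ y t = Σ_t`: the regularized Gram matrix after `t` rounds, defined by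
`Σ_0 = α I_m` and `Σ_t = Σ_{t-1} + Σ_{k=1}^{Φ_t} y_{t,k} y_{t,k}ᵀ`. -/
noncomputable def Sig (m : ℕ) (α : ℝ) (Φ : ℕ → ℕ) (y : ℕ → ℕ → Fin m → ℝ) :
    ℕ → Matrix (Fin m) (Fin m) ℝ
  | 0 => α • (1 : Matrix (Fin m) (Fin m) ℝ)
  | t + 1 => Sig m α Φ y t +
      ∑ k ∈ Finset.Icc 1 (Φ (t + 1)), Matrix.vecMulVec (y (t + 1) k) (y (t + 1) k)

open Real

theorem Real.prod_le_arith_mean_pow {ι : Type*} (s : Finset ι) (f : ι → ℝ)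
    (hf : ∀ i ∈ s, 0 ≤ f i) : ∏ i ∈ s, f i ≤ ((∑ i ∈ s, f i) / #s) ^ #s := by
  rcases s.eq_empty_or_nonempty with rfl | hs
  · simp
  have hcard : (#s : ℝ) ≠ 0 := by simp [hs.ne_empty]
  have amgm := geom_mean_le_arith_mean_weighted s (fun _ ↦ (#s : ℝ)⁻¹) f
    (fun _ _ ↦ by positivity) (by simp [hcard]) hf
  rw [← mul_sum, inv_mul_eq_div] at amgm
  calc ∏ i ∈ s, f i = (∏ i ∈ s, f i ^ (#s : ℝ)⁻¹) ^ #s := by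
        rw [← prod_pow]
        refine prod_congr rfl fun i hi ↦ ?_
        rw [← rpow_natCast, ← rpow_mul (hf i hi), inv_mul_cancel₀ hcard, rpow_one]
    _ ≤ ((∑ i ∈ s, f i) / #s) ^ #s :=
        pow_le_pow_left₀ (prod_nonneg fun i hi ↦ rpow_nonneg (hf i hi) _) amgm _

namespace Matrix

variable {n : Type*} [Fintype n]

theorem PosDef.add_vecMulVec_self {A : Matrix n n ℝ} (hA : A.PosDef) (v : n → ℝ) :
    (A + vecMulVec v v).PosDef :=
  hA.add_posSemidef (by simpa using posSemidef_vecMulVec_self_star v)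

variable [DecidableEq n]

theorem PosSemidef.det_le_trace_div_card_pow {A : Matrix n n ℝ} (hA : A.PosSemidef) :
    A.det ≤ (A.trace / Fintype.card n) ^ Fintype.card n := by
  simpa [hA.1.det_eq_prod_eigenvalues, hA.1.trace_eq_sum_eigenvalues] using
    Real.prod_le_arith_mean_pow univ hA.1.eigenvalues fun i _ ↦ hA.eigenvalues_nonneg i

theorem det_add_vecMulVec {R : Type*} [CommRing R] {A : Matrix n n R} (hA : IsUnit A.det)
    (u v : n → R) : (A + vecMulVec u v).det = A.det * (1 + v ⬝ᵥ A⁻¹ *ᵥ u) := by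
  rw [vecMulVec_eq Unit, det_add_replicateCol_mul_replicateRow hA]
  congr 1
  rw [Matrix.mul_assoc, ← replicateCol_mulVec, det_unique]
  simp [replicateRow_mul_replicateCol_apply]

namespace PosDef

variable {A : Matrix n n ℝ}

theorem dotProduct_inv_mulVec_self_nonneg (hA : A.PosDef) (v : n → ℝ) :
    0 ≤ v ⬝ᵥ A⁻¹ *ᵥ v := by
  simpa using hA.inv.posSemidef.dotProduct_mulVec_nonneg v

theorem det_le_det_add_sum_vecMulVec_self {ι : Type*} (hA : A.PosDef) (s : Finset ι)
    (v : ι → n → ℝ) : A.det ≤ (A + ∑ i ∈ s, vecMulVec (v i) (v i)).det := by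
  induction s using Finset.cons_induction generalizing A with
  | empty => simp
  | cons a s ha ih =>
    rw [sum_cons, ← add_assoc]
    refine le_trans ?_ (ih (hA.add_vecMulVec_self (v a)))
    rw [det_add_vecMulVec hA.det_pos.ne'.isUnit]
    exact le_mul_of_one_le_right hA.det_pos.le
      (le_add_of_nonneg_right (hA.dotProduct_inv_mulVec_self_nonneg _))

end PosDef

end Matrix

section Gram

variable {m : ℕ} {α : ℝ} {Φ : ℕ → ℕ} {y : ℕ → ℕ → Fin m → ℝ}

theorem posDef_Sig (hα : 0 < α) : ∀ t, (Sig m α Φ y t).PosDef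
  | 0 => by simpa [Sig] using PosDef.one.smul hα
  | t + 1 => (posDef_Sig hα t).add_posSemidef
      (posSemidef_sum _ fun k _ ↦ by simpa using posSemidef_vecMulVec_self_star (y (t + 1) k))

theorem log_one_add_le_log_det_Sig_succ_sub (hα : 0 < α) (t : ℕ) {k : ℕ}
    (hk : k ∈ Icc 1 (Φ (t + 1))) :
    log (1 + y (t + 1) k ⬝ᵥ (Sig m α Φ y t)⁻¹ *ᵥ y (t + 1) k) ≤
      log (Sig m α Φ y (t + 1)).det - log (Sig m α Φ y t).det := by
  have hA := posDef_Sig (Φ := Φ) (y := y) hα t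
  have hsplit : Sig m α Φ y (t + 1) = Sig m α Φ y t + vecMulVec (y (t + 1) k) (y (t + 1) k) +
      ∑ j ∈ (Icc 1 (Φ (t + 1))).erase k, vecMulVec (y (t + 1) j) (y (t + 1) j) := by
    rw [Sig, ← add_sum_erase _ _ hk, add_assoc]
  have hdet := (hA.add_vecMulVec_self (y (t + 1) k)).det_le_det_add_sum_vecMulVec_self
    ((Icc 1 (Φ (t + 1))).erase k) (y (t + 1))
  rw [← hsplit, det_add_vecMulVec hA.det_pos.ne'.isUnit] at hdet
  have hg := hA.dotProduct_inv_mulVec_self_nonneg (y (t + 1) k)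
  rw [le_sub_iff_add_le', ← log_mul hA.det_pos.ne' (by positivity)]
  exact log_le_log (by have := hA.det_pos; positivity) hdet

theorem sum_log_one_add_le_mul_log_det_Sig_succ_sub (hα : 0 < α) (t : ℕ) {N : ℕ}
    (hΦ : Φ (t + 1) ≤ N) :
    ∑ k ∈ Icc 1 (Φ (t + 1)), log (1 + y (t + 1) k ⬝ᵥ (Sig m α Φ y t)⁻¹ *ᵥ y (t + 1) k) ≤
      N * (log (Sig m α Φ y (t + 1)).det - log (Sig m α Φ y t).det) := by
  have hA := posDef_Sig (Φ := Φ) (y := y) hα t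
  have hmono : 0 ≤ log (Sig m α Φ y (t + 1)).det - log (Sig m α Φ y t).det :=
    sub_nonneg.2 (log_le_log hA.det_pos (hA.det_le_det_add_sum_vecMulVec_self _ _))
  calc _ ≤ #(Icc 1 (Φ (t + 1))) • (log (Sig m α Φ y (t + 1)).det - log (Sig m α Φ y t).det) :=
        sum_le_card_nsmul _ _ _ fun k hk ↦ log_one_add_le_log_det_Sig_succ_sub hα t hk
    _ ≤ _ := by
        rw [nsmul_eq_mul, Nat.card_Icc, add_tsub_cancel_right]
        gcongr

theorem sum_sum_log_one_add_le_mul_log_det_Sig_sub (hα : 0 < α) {N : ℕ} :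
    ∀ T, (∀ t ∈ Icc 1 T, Φ t ≤ N) →
    ∑ t ∈ Icc 1 T, ∑ k ∈ Icc 1 (Φ t), log (1 + y t k ⬝ᵥ (Sig m α Φ y (t - 1))⁻¹ *ᵥ y t k) ≤
      N * (log (Sig m α Φ y T).det - log (Sig m α Φ y 0).det)
  | 0, _ => by simp
  | T + 1, hΦ => by
    have hprev := sum_sum_log_one_add_le_mul_log_det_Sig_sub hα T fun t ht ↦
      hΦ t (Icc_subset_Icc_right T.le_succ ht)
    have hlast := sum_log_one_add_le_mul_log_det_Sig_succ_sub (y := y) hα T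
      (hΦ (T + 1) (by simp))
    rw [sum_Icc_succ_top (by omega), add_tsub_cancel_right]
    linarith

theorem trace_Sig_le {N T : ℕ} (hΦ : ∀ t ∈ Icc 1 T, Φ t ≤ N)
    (hy : ∀ t ∈ Icc 1 T, ∀ k ∈ Icc 1 (Φ t), y t k ⬝ᵥ y t k ≤ 1) :
    (Sig m α Φ y T).trace ≤ m * α + T * N := by
  induction T with
  | zero => simp [Sig, mul_comm]
  | succ T ih =>
    have hT : T + 1 ∈ Icc 1 (T + 1) := by simp
    have hround : ∑ k ∈ Icc 1 (Φ (T + 1)), y (T + 1) k ⬝ᵥ y (T + 1) k ≤ N := by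
      refine (sum_le_card_nsmul _ _ 1 (hy _ hT)).trans ?_
      simpa using hΦ _ hT
    have hprev := ih (fun t ht ↦ hΦ t (Icc_subset_Icc_right T.le_succ ht))
      (fun t ht ↦ hy t (Icc_subset_Icc_right T.le_succ ht))
    rw [Sig, trace_add, trace_sum]
    simp only [trace_vecMulVec]
    push_cast
    linarith

theorem log_det_Sig_sub_le {N T : ℕ} (hm : m ≠ 0) (hα : 0 < α)
    (htr : (Sig m α Φ y T).trace ≤ m * α + T * N) :
    log (Sig m α Φ y T).det - log (Sig m α Φ y 0).det ≤ m * log (1 + T * N / (m * α)) := by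
  have hA := posDef_Sig (Φ := Φ) (y := y) hα T
  have hdet : (Sig m α Φ y T).det ≤ (α * (1 + T * N / (m * α))) ^ m :=
    calc _ ≤ ((Sig m α Φ y T).trace / m) ^ m := by
          simpa using hA.posSemidef.det_le_trace_div_card_pow
      _ ≤ ((m * α + T * N) / m) ^ m := by
          gcongr
          exact div_nonneg hA.posSemidef.trace_nonneg m.cast_nonneg
      _ = _ := by field_simp
  have hlog := log_le_log hA.det_pos hdet
  rw [log_pow, log_mul hα.ne' (by positivity)] at hlog
  simp only [Sig, det_smul, det_one, mul_one, Fintype.card_fin, log_pow]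
  linarith

end Gram

theorem stmt14_general (m N T : ℕ) (hm : 1 ≤ m)
    (α : ℝ) (hα : 0 < α)
    (Φ : ℕ → ℕ) (hΦ : ∀ t ∈ Finset.Icc 1 T, Φ t ≤ N)
    (y : ℕ → ℕ → Fin m → ℝ)
    (hy : ∀ t ∈ Finset.Icc 1 T, ∀ k ∈ Finset.Icc 1 (Φ t),
      Real.sqrt (y t k ⬝ᵥ y t k) ≤ 1) :
    ∑ t ∈ Finset.Icc 1 T, ∑ k ∈ Finset.Icc 1 (Φ t),
        Real.log (1 + y t k ⬝ᵥ (Sig m α Φ y (t - 1))⁻¹ *ᵥ y t k) ≤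
      (N : ℝ) * m * Real.log (1 + T * N / (m * α)) := by
  have htr := trace_Sig_le (α := α) hΦ fun t ht k hk ↦ sqrt_le_one.1 (hy t ht k hk)
  rw [mul_assoc]
  exact (sum_sum_log_one_add_le_mul_log_det_Sig_sub hα T hΦ).trans
    (mul_le_mul_of_nonneg_left (log_det_Sig_sub_le (by omega) hα htr) N.cast_nonneg)

/-- the log-determinant (elliptical potential) bound
`Σ_{t=1}^T Σ_{k=1}^{Φ_t} log(1 + g_{t,k}²) ≤ N m log(1 + TN/(mα))`, where
`g_{t,k}² = y_{t,k}ᵀ (Σ_{t-1})⁻¹ y_{t,k}`. -/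
theorem stmt14 (m N T : ℕ) (hm : 1 ≤ m) (hN : 1 ≤ N) (hT : 1 ≤ T)
    (α : ℝ) (hα : 0 < α)
    (Φ : ℕ → ℕ) (hΦ : ∀ t ∈ Finset.Icc 1 T, Φ t ≤ N)
    (y : ℕ → ℕ → Fin m → ℝ)
    (hy : ∀ t ∈ Finset.Icc 1 T, ∀ k ∈ Finset.Icc 1 (Φ t),
      Real.sqrt (y t k ⬝ᵥ y t k) ≤ 1) :
    ∑ t ∈ Finset.Icc 1 T, ∑ k ∈ Finset.Icc 1 (Φ t),
        Real.log (1 + y t k ⬝ᵥ (Sig m α Φ y (t - 1))⁻¹ *ᵥ y t k) ≤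
      (N : ℝ) * m * Real.log (1 + T * N / (m * α)) :=
  stmt14_general m N T hm α hα Φ hΦ y hy
end

section
/- Let N ≥ 1, let σ be a permutation of {1,…,N}, let λ, λ̃ : {1,…,N} → [0,1], and let q, q̃, s, s̃ ∈ [0,1]. Then for every 1 ≤ k ≤ N, | A_σ(k; q, s, λ) − A_σ(k; q̃, s̃, λ̃) | ≤ Σ_{u=1}^{k−1} ( |q − q̃| (1 − λ_{σ_u}) + 2 |λ_{σ_u} − λ̃_{σ_u}| + |q s − q̃ s̃| λ_{σ_u} ) · A_σ(u; q, s, λ) · q̃^{k−u−1}. -/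
/-!
Both sides satisfy a product recurrence `A(u+1) = c_u A(u)`, `Ã(u+1) = d_u Ã(u)` with
`c_u = q (s λ + 1 - λ)` (at `λ = λ_{σ_u}`) and `|d_u| ≤ q̃`. Writing
`A(u+1) - Ã(u+1) = (c_u - d_u) A(u) + d_u (A(u) - Ã(u))` and unrolling gives
`|A(k) - Ã(k)| ≤ Σ_u |c_u - d_u| A(u) q̃^(k-u-1)`; it remains to bound `|c_u - d_u|` termwise.
-/

open Finset

theorem Finset.prod_mul_add_eq_sum_range_powersetCard {ι R : Type*} [CommSemiring R]
    [DecidableEq ι] (s : Finset ι) (x : R) (f g : ι → R) :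
    ∏ i ∈ s, (x * f i + g i) =
      ∑ u ∈ range (#s + 1), x ^ u *
        ∑ Q ∈ s.powersetCard u, (∏ i ∈ Q, f i) * ∏ i ∈ s \ Q, g i := by
  rw [prod_add, powerset_card_biUnion,
    sum_biUnion ((pairwise_disjoint_powersetCard s).set_pairwise _)]
  refine sum_congr rfl fun u _ => ?_
  rw [mul_sum]
  refine sum_congr rfl fun Q hQ => ?_
  rw [prod_mul_distrib, prod_const, (mem_powersetCard.mp hQ).2, mul_assoc]

namespace Afun

variable (σ : ℕ → ℕ) (lam : ℕ → ℝ) (q s : ℝ)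

theorem eq_pow_mul_prod {k : ℕ} (hk : 1 ≤ k) :
    Afun σ lam q s k =
      q ^ (k - 1) * ∏ i ∈ Icc 1 (k - 1), (s * lam (σ i) + (1 - lam (σ i))) := by
  rw [prod_mul_add_eq_sum_range_powersetCard, Nat.card_Icc, Nat.add_sub_cancel,
    Nat.sub_add_cancel hk]
  rfl

theorem one : Afun σ lam q s 1 = 1 := by
  simp [eq_pow_mul_prod σ lam q s le_rfl]

theorem succ {k : ℕ} (hk : 1 ≤ k) :
    Afun σ lam q s (k + 1) = q * (s * lam (σ k) + (1 - lam (σ k))) * Afun σ lam q s k := by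
  obtain ⟨j, rfl⟩ := Nat.exists_eq_add_of_le' hk
  rw [eq_pow_mul_prod σ lam q s hk, eq_pow_mul_prod σ lam q s (Nat.le_add_left 1 _),
    Nat.add_sub_cancel, Nat.add_sub_cancel, prod_Icc_succ_top (Nat.le_add_left 1 j), pow_succ]
  ring

end Afun

theorem Afun.nonneg {σ : ℕ → ℕ} {lam : ℕ → ℝ} {q s : ℝ} (hq : 0 ≤ q) (hs : 0 ≤ s)
    {k : ℕ} (hk : 1 ≤ k) (hlam : ∀ i ∈ Ico 1 k, lam (σ i) ∈ Set.Icc (0 : ℝ) 1) :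
    0 ≤ Afun σ lam q s k := by
  rw [Afun.eq_pow_mul_prod σ lam q s hk]
  refine mul_nonneg (pow_nonneg hq _) (prod_nonneg fun i hi => ?_)
  obtain ⟨hl0, hl1⟩ := hlam i (by simp only [mem_Icc, mem_Ico] at hi ⊢; omega)
  nlinarith

theorem abs_mul_affine_le {q s l : ℝ} (hq : 0 ≤ q) (hs : s ∈ Set.Icc (0 : ℝ) 1)
    (hl : l ∈ Set.Icc (0 : ℝ) 1) : |q * (s * l + (1 - l))| ≤ q := by
  obtain ⟨hs0, hs1⟩ := hs
  obtain ⟨hl0, hl1⟩ := hl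
  rw [abs_mul, abs_of_nonneg hq, abs_of_nonneg (by nlinarith)]
  exact mul_le_of_le_one_right hq (by nlinarith)

theorem abs_mul_affine_sub_mul_affine_le {q q' s s' l l' : ℝ} (hq' : q' ∈ Set.Icc (0 : ℝ) 1)
    (hs' : s' ∈ Set.Icc (0 : ℝ) 1) (hl : l ∈ Set.Icc (0 : ℝ) 1) :
    |q * (s * l + (1 - l)) - q' * (s' * l' + (1 - l'))| ≤
      |q - q'| * (1 - l) + 2 * |l - l'| + |q * s - q' * s'| * l := by
  obtain ⟨hl0, hl1⟩ := hl
  have hq's' : |q' * s' - q'| ≤ 2 := by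
    obtain ⟨hq'0, hq'1⟩ := hq'
    obtain ⟨hs'0, hs'1⟩ := hs'
    rw [abs_le]; constructor <;> nlinarith
  calc |q * (s * l + (1 - l)) - q' * (s' * l' + (1 - l'))|
      = |(q - q') * (1 - l) + (q' * s' - q') * (l - l') + (q * s - q' * s') * l| := by ring_nf
    _ ≤ |(q - q') * (1 - l)| + |(q' * s' - q') * (l - l')| + |(q * s - q' * s') * l| :=
      abs_add_three _ _ _
    _ ≤ |q - q'| * (1 - l) + 2 * |l - l'| + |q * s - q' * s'| * l := by
      rw [abs_mul, abs_mul, abs_mul, abs_of_nonneg (sub_nonneg.2 hl1), abs_of_nonneg hl0]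
      gcongr

theorem abs_sub_le_sum_of_mul_recurrence {a b c d : ℕ → ℝ} {D : ℝ} {k : ℕ} (hk : 1 ≤ k)
    (h₁ : a 1 = b 1) (ha : ∀ u ∈ Ico 1 k, a (u + 1) = c u * a u)
    (hb : ∀ u ∈ Ico 1 k, b (u + 1) = d u * b u) (hd : ∀ u ∈ Ico 1 k, |d u| ≤ D) :
    |a k - b k| ≤ ∑ u ∈ Icc 1 (k - 1), |c u - d u| * |a u| * D ^ (k - u - 1) := by
  induction k, hk using Nat.le_induction with
  | base => simp [h₁]
  | succ k hk ih =>
    have hkk : k ∈ Ico 1 (k + 1) := mem_Ico.2 ⟨hk, k.lt_succ_self⟩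
    have hsub : Ico 1 k ⊆ Ico 1 (k + 1) := Ico_subset_Ico_right k.le_succ
    have ih := ih (fun u hu => ha u (hsub hu)) (fun u hu => hb u (hsub hu))
      (fun u hu => hd u (hsub hu))
    have hD : 0 ≤ D := (abs_nonneg _).trans (hd k hkk)
    calc |a (k + 1) - b (k + 1)| = |(c k - d k) * a k + d k * (a k - b k)| := by
          rw [ha k hkk, hb k hkk]; ring_nf
      _ ≤ |c k - d k| * |a k| +
            D * ∑ u ∈ Icc 1 (k - 1), |c u - d u| * |a u| * D ^ (k - u - 1) := by
          refine (abs_add_le _ _).trans ?_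
          rw [abs_mul, abs_mul]
          gcongr
          exact hd k hkk
      _ = ∑ u ∈ Icc 1 (k + 1 - 1), |c u - d u| * |a u| * D ^ (k + 1 - u - 1) := by
          obtain ⟨j, rfl⟩ := Nat.exists_eq_add_of_le' hk
          simp only [Nat.add_sub_cancel]
          rw [sum_Icc_succ_top (Nat.le_add_left 1 j), mul_sum, add_comm]
          congr 1
          · refine sum_congr rfl fun u hu => ?_
            rw [show j + 1 + 1 - u - 1 = j + 1 - u - 1 + 1 by simp only [mem_Icc] at hu; omega,
              pow_succ]
            ring
          · simp

theorem stmt18_general (N : ℕ) (σ : ℕ → ℕ)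
    (hσ : Set.BijOn σ (Set.Icc 1 N) (Set.Icc 1 N))
    (lam lamT : ℕ → ℝ)
    (hlam : ∀ k ∈ Set.Icc 1 N, lam k ∈ Set.Icc (0 : ℝ) 1)
    (hlamT : ∀ k ∈ Set.Icc 1 N, lamT k ∈ Set.Icc (0 : ℝ) 1)
    (q qT s sT : ℝ)
    (hq : q ∈ Set.Icc (0 : ℝ) 1) (hqT : qT ∈ Set.Icc (0 : ℝ) 1)
    (hs : s ∈ Set.Icc (0 : ℝ) 1) (hsT : sT ∈ Set.Icc (0 : ℝ) 1)
    (k : ℕ) (hk1 : 1 ≤ k) (hkN : k ≤ N) :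
    |Afun σ lam q s k - Afun σ lamT qT sT k| ≤
      ∑ u ∈ Finset.Icc 1 (k - 1),
        (|q - qT| * (1 - lam (σ u)) + 2 * |lam (σ u) - lamT (σ u)| +
            |q * s - qT * sT| * lam (σ u)) *
          Afun σ lam q s u * qT ^ (k - u - 1) := by
  have hσk : ∀ u ∈ Ico 1 k, σ u ∈ Set.Icc 1 N := fun u hu =>
    hσ.mapsTo ⟨(mem_Ico.1 hu).1, (mem_Ico.1 hu).2.le.trans hkN⟩
  calc _ ≤ ∑ u ∈ Icc 1 (k - 1), |q * (s * lam (σ u) + (1 - lam (σ u))) -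
          qT * (sT * lamT (σ u) + (1 - lamT (σ u)))| * |Afun σ lam q s u| * qT ^ (k - u - 1) :=
        abs_sub_le_sum_of_mul_recurrence hk1 (by rw [Afun.one, Afun.one])
          (fun u hu => Afun.succ σ lam q s (mem_Ico.1 hu).1)
          (fun u hu => Afun.succ σ lamT qT sT (mem_Ico.1 hu).1)
          (fun u hu => abs_mul_affine_le hqT.1 hsT (hlamT _ (hσk u hu)))
    _ ≤ _ := by
      refine sum_le_sum fun u hu => ?_
      have hu' : u ∈ Ico 1 k := by simp only [mem_Icc, mem_Ico] at hu ⊢; omega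
      have hA : 0 ≤ Afun σ lam q s u := Afun.nonneg hq.1 hs.1 (mem_Ico.1 hu').1
        fun i hi => hlam _ (hσk i (Ico_subset_Ico_right (mem_Ico.1 hu').2.le hi))
      rw [abs_of_nonneg hA]
      have hqT0 := hqT.1
      gcongr
      exact abs_mul_affine_sub_mul_affine_le hqT hsT (hlam _ (hσk u hu'))

/-- perturbation bound for `A_σ(k; q, s, λ)`. -/
theorem stmt18 (N : ℕ) (hN : 1 ≤ N) (σ : ℕ → ℕ)
    (hσ : Set.BijOn σ (Set.Icc 1 N) (Set.Icc 1 N))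
    (lam lamT : ℕ → ℝ)
    (hlam : ∀ k ∈ Set.Icc 1 N, lam k ∈ Set.Icc (0 : ℝ) 1)
    (hlamT : ∀ k ∈ Set.Icc 1 N, lamT k ∈ Set.Icc (0 : ℝ) 1)
    (q qT s sT : ℝ)
    (hq : q ∈ Set.Icc (0 : ℝ) 1) (hqT : qT ∈ Set.Icc (0 : ℝ) 1)
    (hs : s ∈ Set.Icc (0 : ℝ) 1) (hsT : sT ∈ Set.Icc (0 : ℝ) 1)
    (k : ℕ) (hk1 : 1 ≤ k) (hkN : k ≤ N) :
    |Afun σ lam q s k - Afun σ lamT qT sT k| ≤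
      ∑ u ∈ Finset.Icc 1 (k - 1),
        (|q - qT| * (1 - lam (σ u)) + 2 * |lam (σ u) - lamT (σ u)| +
            |q * s - qT * sT| * lam (σ u)) *
          Afun σ lam q s u * qT ^ (k - u - 1) :=
  stmt18_general N σ hσ lam lamT hlam hlamT q qT s sT hq hqT hs hsT k hk1 hkN
end
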